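/- Let f, g : ℂ → V be polynomial maps into a finite-dimensional vector space, and suppose for all λ ∈ ℂ the vector fields on a manifold satisfy a relation forcing α(λ)·(a + λb) + β(λ)·(c − λd) to equal a fixed polynomial of degree ≤ 3 in λ, where a, b, c, d are linearly independent vectors. Then α and β are polynomials in λ of degree at most 2. -/

import Mathlib

open Finset Polynomial

private lemma key_cubic (φ : ℂ → ℂ) (A B : Fin 4 → ℂ)
    (h1 : ∀ x : ℂ, φ x = A 0 + A 1 * x + A 2 * x ^ 2 + A 3 * x ^ 3)
    (h2 : ∀ x : ℂ, x * φ x = B 0 + B 1 * x + B 2 * x ^ 2 + B 3 * x ^ 3) :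
    A 3 = 0 := by
  set p : ℂ[X] := C (A 0) * X + C (A 1) * X ^ 2 + C (A 2) * X ^ 3 + C (A 3) * X ^ 4
      - (C (B 0) + C (B 1) * X + C (B 2) * X ^ 2 + C (B 3) * X ^ 3) with hp
  have hev : ∀ x : ℂ, p.eval x = (0 : ℂ[X]).eval x := by
    intro x
    simp only [hp, eval_add, eval_sub, eval_mul, eval_pow, eval_C, eval_X, eval_zero]
    have h2x := h2 x
    rw [h1 x] at h2x
    linear_combination h2x
  have hp0 : p = 0 := Polynomial.funext hev
  have := congrArg (fun q : ℂ[X] => q.coeff 4) hp0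
  simpa [hp, coeff_add, coeff_sub, coeff_C_mul, coeff_X_pow, coeff_C, coeff_X] using this

/-- Power counting: if `a, b, c, d` are linearly independent vectors in a complex vector
space `V`, and `λ ↦ α(λ)·(a + λb) + β(λ)·(c − λd)` is a polynomial function of degree at
most `3` in `λ`, then `α` and `β` are polynomial functions of degree at most `2`. -/
theorem power_counting_quadratic
    (V : Type*) [AddCommGroup V] [Module ℂ V]
    (a b c d : V) (hli : LinearIndependent ℂ ![a, b, c, d])
    (α β : ℂ → ℂ)
    (w : Fin 4 → V)
    (h : ∀ lam : ℂ, α lam • (a + lam • b) + β lam • (c - lam • d) =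
      ∑ i : Fin 4, lam ^ (i : ℕ) • w i) :
    ∃ a₀ a₁ a₂ b₀ b₁ b₂ : ℂ, ∀ lam : ℂ,
      α lam = a₀ + a₁ * lam + a₂ * lam ^ 2 ∧ β lam = b₀ + b₁ * lam + b₂ * lam ^ 2 := by
  set v : Fin 4 → V := ![a, b, c, d] with hv
  set f : (Fin 4 → ℂ) →ₗ[ℂ] V := Fintype.linearCombination ℂ v with hf
  have hker : LinearMap.ker f = ⊥ := by
    rw [LinearMap.ker_eq_bot']
    intro m hm
    have := Fintype.linearIndependent_iff.mp hli m (by simpa [hf, Fintype.linearCombination_apply] using hm)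
    funext i; exact this i
  obtain ⟨g, hg⟩ := f.exists_leftInverse_of_injective hker
  have hgv : ∀ i : Fin 4, g (v i) = Pi.single i 1 := by
    intro i
    have h1 : f (Pi.single i 1) = v i := by
      simp [hf, Fintype.linearCombination_apply, Pi.single_apply]
    have := congrArg (fun m => g (f m)) (rfl : Pi.single i (1:ℂ) = Pi.single i 1)
    calc g (v i) = g (f (Pi.single i 1)) := by rw [h1]
    _ = Pi.single i 1 := by
        have := LinearMap.congr_fun hg (Pi.single i 1)
        simpa using this
  have ha : g a = Pi.single 0 1 := by simpa [hv] using hgv 0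
  have hb : g b = Pi.single 1 1 := by simpa [hv] using hgv 1
  have hc : g c = Pi.single 2 1 := by simpa [hv] using hgv 2
  have hd : g d = Pi.single 3 1 := by simpa [hv] using hgv 3
  set A : Fin 4 → ℂ := fun i => g (w i) 0 with hA
  set B : Fin 4 → ℂ := fun i => g (w i) 1 with hB
  set Cc : Fin 4 → ℂ := fun i => g (w i) 2 with hC
  set D : Fin 4 → ℂ := fun i => g (w i) 3 with hD
  have hco : ∀ (lam : ℂ) (j : Fin 4),
      α lam * (((Pi.single (0:Fin 4) (1:ℂ) : Fin 4 → ℂ)) j + lam * ((Pi.single (1:Fin 4) (1:ℂ) : Fin 4 → ℂ)) j)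
        + β lam * (((Pi.single (2:Fin 4) (1:ℂ) : Fin 4 → ℂ)) j - lam * ((Pi.single (3:Fin 4) (1:ℂ) : Fin 4 → ℂ)) j)
      = ∑ i : Fin 4, lam ^ (i : ℕ) * g (w i) j := by
    intro lam j
    have := congrArg g (h lam)
    rw [map_add, map_smul, map_smul, map_add, map_sub, map_smul, map_smul,
      ha, hb, hc, hd, map_sum] at this
    have := congrFun this j
    simp only [map_smul, Finset.sum_apply, Pi.add_apply, Pi.sub_apply, Pi.smul_apply, smul_eq_mul] at this
    linear_combination this
  have hα : ∀ lam : ℂ, α lam = A 0 + A 1 * lam + A 2 * lam ^ 2 + A 3 * lam ^ 3 := by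
    intro lam
    have := hco lam 0
    simp [Fin.sum_univ_four, Pi.single_apply, (show ((3:Fin 4):ℕ) = 3 from rfl), hA] at this ⊢
    linear_combination this
  have hlα : ∀ lam : ℂ, lam * α lam = B 0 + B 1 * lam + B 2 * lam ^ 2 + B 3 * lam ^ 3 := by
    intro lam
    have := hco lam 1
    simp [Fin.sum_univ_four, Pi.single_apply, (show ((3:Fin 4):ℕ) = 3 from rfl), hB] at this ⊢
    linear_combination this
  have hβ : ∀ lam : ℂ, β lam = Cc 0 + Cc 1 * lam + Cc 2 * lam ^ 2 + Cc 3 * lam ^ 3 := by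
    intro lam
    have := hco lam 2
    simp [Fin.sum_univ_four, Pi.single_apply, (show ((3:Fin 4):ℕ) = 3 from rfl), hC] at this ⊢
    linear_combination this
  have hlβ : ∀ lam : ℂ, lam * β lam = -D 0 - D 1 * lam - D 2 * lam ^ 2 - D 3 * lam ^ 3 := by
    intro lam
    have := hco lam 3
    simp [Fin.sum_univ_four, Pi.single_apply, (show ((3:Fin 4):ℕ) = 3 from rfl), hD] at this ⊢
    linear_combination -this
  have hA3 : A 3 = 0 := key_cubic α A B hα hlα
  have hC3 : Cc 3 = 0 := key_cubic β Cc (fun i => -D i) hβ (by intro x; linear_combination hlβ x)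
  exact ⟨A 0, A 1, A 2, Cc 0, Cc 1, Cc 2, fun lam => ⟨by rw [hα lam, hA3]; ring, by rw [hβ lam, hC3]; ring⟩⟩
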